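/- arXiv:1512.02717 — 4 statements merged into one kernel-verified Lean document; each statement's English description precedes it below -/
import Mathlib

section
/- (Proposition 3.2 of the paper, restated with explicit hypotheses on V and ν.) Fix d ≥ 1 and λ > 0. Let V : ℝ → [0,∞) be nondecreasing with V(s) = 0 for s ≤ 0, V(s) > 0 for s > 0, subadditive (V(s+t) ≤ V(s) + V(t) for all s,t), and satisfy the lower scaling condition: there are δ > 0 and C_V ≥ 1 such that V(R)/V(r) ≥ C_V^{-1}(R/r)^{δ} for all 0 < r ≤ R. Let ν : (0,∞) → [0,∞) be measurable with ν(s) ≤ C₀ s^{-d} V(s)^{-2} for all s > 0. Then there is a constant C > 0, depending only on d, λ, δ, C_V, C₀, such that for every r > 0 and every x = (x̃, x_d) ∈ ℝ^d with 0 < x_d ≤ λ r, ∫_{{y ∈ ℝ^d : |x − y| ≥ r}} V((y_d)⁺) ν(|x − y|) dy ≤ C / V(r), where (y_d)⁺ := max(y_d, 0) and y_d denotes the last coordinate of y. -/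
/-!
For `s = |x - y| ≥ r` the last coordinate satisfies `y_d ≤ x_d + s ≤ (λ + 1) s ≤ N s` with
`N = ⌈λ + 1⌉`, so subadditivity gives `V((y_d)⁺) ≤ N V(s)`. Combined with the bound on `ν` and the
lower scaling `V(s) ≥ C_V⁻¹ (s / r)^δ V(r)`, the integrand is at most
`N C₀ C_V V(r)⁻¹ · r^δ s^{-(d+δ)}`. The tail integral `r^δ ∫_{|z| ≥ r} |z|^{-(d+δ)} dz` does not
depend on `r` (substitute `z = r w`), and it is finite because `d + δ > d`.
-/

open MeasureTheory Set Module
open scoped ENNReal Pointwise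

namespace MeasureTheory.Measure

variable {E : Type*} [NormedAddCommGroup E] [NormedSpace ℝ E] [MeasurableSpace E] [BorelSpace E]
  [FiniteDimensional ℝ E] (μ : Measure E) [μ.IsAddHaarMeasure]

theorem setLIntegral_comp_smul_of_pos (f : E → ℝ≥0∞) (s : Set E) {R : ℝ} (hR : 0 < R) :
    ∫⁻ x in s, f (R • x) ∂μ = ENNReal.ofReal ((R ^ finrank ℝ E)⁻¹) * ∫⁻ x in R • s, f x ∂μ := by
  let e : E ≃ᵐ E := (Homeomorph.smul (Units.mk0 R hR.ne')).toMeasurableEquiv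
  have he : (e : E → E) = (R • ·) := rfl
  have := (e.measurable.measurePreserving μ).setLIntegral_comp_emb e.measurableEmbedding f s
  rw [he] at this
  rw [this, map_addHaar_smul μ hR.ne', restrict_smul, lintegral_smul_measure, image_smul,
    abs_of_pos (by positivity), smul_eq_mul]

theorem setLIntegral_scaled_rpow_neg_norm_ge (p : ℝ) {c : ℝ} (hc : 0 < c) :
    ∫⁻ z in {z : E | c ≤ ‖z‖}, ENNReal.ofReal (c ^ (p - finrank ℝ E) * ‖z‖ ^ (-p)) ∂μ
      = ∫⁻ w in {w : E | 1 ≤ ‖w‖}, ENNReal.ofReal (‖w‖ ^ (-p)) ∂μ := by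
  have hscale : c • {w : E | 1 ≤ ‖w‖} = {z : E | c ≤ ‖z‖} := by
    ext z
    rw [mem_smul_set_iff_inv_smul_mem₀ hc.ne', mem_ofPred_eq, mem_ofPred_eq, norm_smul,
      Real.norm_of_nonneg (inv_nonneg.2 hc.le), ← div_eq_inv_mul, one_le_div hc]
  have hcomp : ∀ w : E, ENNReal.ofReal (c ^ (p - finrank ℝ E) * ‖c • w‖ ^ (-p))
      = ENNReal.ofReal ((c ^ finrank ℝ E)⁻¹) * ENNReal.ofReal (‖w‖ ^ (-p)) := by
    intro w
    rw [← ENNReal.ofReal_mul (by positivity), norm_smul, Real.norm_of_nonneg hc.le,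
      Real.mul_rpow hc.le (norm_nonneg w), ← mul_assoc, ← Real.rpow_add hc, ← Real.rpow_natCast,
      ← Real.rpow_neg hc.le]
    ring_nf
  have key := setLIntegral_comp_smul_of_pos μ
    (fun z => ENNReal.ofReal (c ^ (p - finrank ℝ E) * ‖z‖ ^ (-p))) {w : E | 1 ≤ ‖w‖} hc
  simp only [hcomp, lintegral_const_mul' _ _ ENNReal.ofReal_ne_top, hscale] at key
  refine ((ENNReal.mul_right_inj ?_ ENNReal.ofReal_ne_top).1 key).symm
  simpa using pow_pos hc _

theorem setLIntegral_rpow_neg_norm_ge_one_lt_top {p : ℝ} (hp : finrank ℝ E < p) :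
    ∫⁻ w in {w : E | 1 ≤ ‖w‖}, ENNReal.ofReal (‖w‖ ^ (-p)) ∂μ < ∞ := by
  have hp0 : 0 < p := (Nat.cast_nonneg _).trans_lt hp
  have hle : ∀ w ∈ {w : E | 1 ≤ ‖w‖},
      ENNReal.ofReal (‖w‖ ^ (-p)) ≤ ENNReal.ofReal (2 ^ p) * ENNReal.ofReal ((1 + ‖w‖) ^ (-p)) := by
    intro w (hw : 1 ≤ ‖w‖)
    rw [← ENNReal.ofReal_mul (by positivity)]
    refine ENNReal.ofReal_le_ofReal ?_
    calc ‖w‖ ^ (-p) = 2 ^ p * (2 * ‖w‖) ^ (-p) := by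
          rw [Real.mul_rpow zero_le_two (by positivity), ← mul_assoc, ← Real.rpow_add two_pos]
          simp
      _ ≤ 2 ^ p * (1 + ‖w‖) ^ (-p) := by
          refine mul_le_mul_of_nonneg_left ?_ (by positivity)
          exact Real.rpow_le_rpow_of_nonpos (by positivity) (by linarith) (neg_nonpos.2 hp0.le)
  calc _ ≤ ∫⁻ w in {w : E | 1 ≤ ‖w‖},
          ENNReal.ofReal (2 ^ p) * ENNReal.ofReal ((1 + ‖w‖) ^ (-p)) ∂μ :=
        setLIntegral_mono (by fun_prop) hle
    _ ≤ ENNReal.ofReal (2 ^ p) * ∫⁻ w, ENNReal.ofReal ((1 + ‖w‖) ^ (-p)) ∂μ := by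
        rw [← lintegral_const_mul' _ _ ENNReal.ofReal_ne_top]
        exact setLIntegral_le_lintegral _ _
    _ < ∞ := ENNReal.mul_lt_top ENNReal.ofReal_lt_top (finite_integral_one_add_norm hp)

theorem setLIntegral_scaled_rpow_neg_norm_sub_ge (x : E) (p : ℝ) {c : ℝ} (hc : 0 < c) :
    ∫⁻ y in {y : E | c ≤ ‖x - y‖}, ENNReal.ofReal (c ^ (p - finrank ℝ E) * ‖x - y‖ ^ (-p)) ∂μ
      = ∫⁻ w in {w : E | 1 ≤ ‖w‖}, ENNReal.ofReal (‖w‖ ^ (-p)) ∂μ := by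
  simp_rw [norm_sub_rev x]
  exact ((measurePreserving_sub_right μ x).setLIntegral_comp_preimage
      (measurableSet_le measurable_const measurable_norm) (by fun_prop)).trans
    (setLIntegral_scaled_rpow_neg_norm_ge μ p hc)

theorem exists_setLIntegral_scaled_rpow_neg_norm_sub_ge_le {p : ℝ} (hp : finrank ℝ E < p) :
    ∃ K : ℝ, 0 < K ∧ ∀ c : ℝ, 0 < c → ∀ x : E,
      ∫⁻ y in {y : E | c ≤ ‖x - y‖}, ENNReal.ofReal (c ^ (p - finrank ℝ E) * ‖x - y‖ ^ (-p)) ∂μ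
        ≤ ENNReal.ofReal K := by
  set T := ∫⁻ w in {w : E | 1 ≤ ‖w‖}, ENNReal.ofReal (‖w‖ ^ (-p)) ∂μ
  refine ⟨T.toReal + 1, by positivity, fun c hc x => ?_⟩
  rw [setLIntegral_scaled_rpow_neg_norm_sub_ge μ x p hc,
    ENNReal.le_ofReal_iff_toReal_le (setLIntegral_rpow_neg_norm_ge_one_lt_top μ hp).ne
      (by positivity)]
  linarith

end MeasureTheory.Measure

theorem le_nat_mul_of_subadditive {V : ℝ → ℝ} (h0 : V 0 = 0)
    (hsub : ∀ s t, V (s + t) ≤ V s + V t) (n : ℕ) (s : ℝ) : V (n * s) ≤ n * V s := by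
  induction n with
  | zero => simp [h0]
  | succ n ih =>
    calc V ((n + 1 : ℕ) * s) = V (n * s + s) := by push_cast; ring_nf
      _ ≤ V (n * s) + V s := hsub _ _
      _ ≤ (n + 1 : ℕ) * V s := by push_cast; linarith

theorem inv_le_of_lowerScaling {V : ℝ → ℝ} {δ CV r s : ℝ} (hCV : 0 < CV) (hr : 0 < r)
    (hVr : 0 < V r) (hrs : r ≤ s) (hscale : CV⁻¹ * (s / r) ^ δ ≤ V s / V r) :
    (V s)⁻¹ ≤ CV / V r * (r ^ δ * s ^ (-δ)) := by
  have hs : 0 < s := hr.trans_le hrs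
  have hlow : 0 < CV⁻¹ * (s / r) ^ δ * V r := by positivity
  have hVs : CV⁻¹ * (s / r) ^ δ * V r ≤ V s := (le_div_iff₀ hVr).1 hscale
  calc (V s)⁻¹ ≤ (CV⁻¹ * (s / r) ^ δ * V r)⁻¹ := inv_anti₀ hlow hVs
    _ = CV / V r * (r ^ δ * s ^ (-δ)) := by
      rw [Real.div_rpow hs.le hr.le, Real.rpow_neg hs.le]
      field_simp

theorem mul_le_of_subadditive_of_lowerScaling {V : ℝ → ℝ} {d N : ℕ} {δ CV C₀ k r s t : ℝ}
    (hV0 : V 0 = 0) (hVpos : ∀ s, 0 < s → 0 < V s) (hVmono : Monotone V)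
    (hVsub : ∀ s t, V (s + t) ≤ V s + V t) (hCV : 0 < CV) (hC₀ : 0 ≤ C₀) (hr : 0 < r)
    (hrs : r ≤ s) (hscale : CV⁻¹ * (s / r) ^ δ ≤ V s / V r) (ht : t ≤ N * s) (hk0 : 0 ≤ k)
    (hk : k ≤ C₀ / (s ^ d * V s ^ 2)) :
    V t * k ≤ N * C₀ * CV / V r * (r ^ δ * s ^ (-(d + δ))) := by
  have hs : 0 < s := hr.trans_le hrs
  have hVs := hVpos s hs
  calc V t * k ≤ (N * V s) * (C₀ / (s ^ d * V s ^ 2)) :=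
        mul_le_mul ((hVmono ht).trans (le_nat_mul_of_subadditive hV0 hVsub N s)) hk hk0
          (by positivity)
    _ = N * C₀ * s ^ (-(d : ℝ)) * (V s)⁻¹ := by
        rw [Real.rpow_neg hs.le, Real.rpow_natCast]
        field_simp
    _ ≤ N * C₀ * s ^ (-(d : ℝ)) * (CV / V r * (r ^ δ * s ^ (-δ))) := by
        gcongr
        exact inv_le_of_lowerScaling hCV hr (hVpos r hr) hrs hscale
    _ = N * C₀ * CV / V r * (r ^ δ * s ^ (-(d + δ))) := by
        rw [neg_add, Real.rpow_add hs]
        ring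

theorem max_apply_zero_le_mul_norm_sub {d : ℕ} {x y : EuclideanSpace ℝ (Fin d)} {i : Fin d}
    {a r : ℝ} (ha : 0 ≤ a) (hx : x i ≤ a * r) (hr : r ≤ ‖x - y‖) :
    max (y i) 0 ≤ (a + 1) * ‖x - y‖ := by
  have hcoord : y i - x i ≤ ‖x - y‖ := by
    simpa using (neg_le_abs _).trans (PiLp.norm_apply_le (x - y) i)
  refine max_le ?_ (by positivity)
  linarith [mul_le_mul_of_nonneg_left hr ha]

/-- Proposition 3.2: For `V` nondecreasing, subadditive, vanishing on
`(-∞,0]`, positive on `(0,∞)`, with a lower scaling condition, and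
`ν(s) ≤ C₀ s^{-d} V(s)^{-2}`, there is `C > 0` depending only on `d, λ, δ, C_V, C₀`
such that for every `r > 0` and `x` with `0 < x_d ≤ λ r`,
`∫_{|x-y| ≥ r} V((y_d)⁺) ν(|x-y|) dy ≤ C / V(r)`. -/
theorem stmt_8 (d : ℕ) (hd : 1 ≤ d) (lam δ CV C₀ : ℝ)
    (hlam : 0 < lam) (hδ : 0 < δ) (hCV : 1 ≤ CV) (hC₀ : 0 < C₀) :
    ∃ C : ℝ, 0 < C ∧
      ∀ V ν : ℝ → ℝ,
        (∀ s : ℝ, s ≤ 0 → V s = 0) →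
        (∀ s : ℝ, 0 < s → 0 < V s) →
        (∀ s t : ℝ, s ≤ t → V s ≤ V t) →
        (∀ s t : ℝ, V (s + t) ≤ V s + V t) →
        (∀ r R : ℝ, 0 < r → r ≤ R → CV⁻¹ * (R / r) ^ δ ≤ V R / V r) →
        Measurable ν →
        (∀ s : ℝ, 0 < s → 0 ≤ ν s) →
        (∀ s : ℝ, 0 < s → ν s ≤ C₀ / (s ^ d * V s ^ 2)) →
        ∀ r : ℝ, 0 < r →
          ∀ x : EuclideanSpace ℝ (Fin d),
            0 < x ⟨d - 1, by omega⟩ → x ⟨d - 1, by omega⟩ ≤ lam * r →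
            ∫⁻ y : EuclideanSpace ℝ (Fin d) in {y | r ≤ ‖x - y‖},
                ENNReal.ofReal (V (max (y ⟨d - 1, by omega⟩) 0) * ν ‖x - y‖)
              ≤ ENNReal.ofReal (C / V r) := by
  obtain ⟨K, hK, htail⟩ := Measure.exists_setLIntegral_scaled_rpow_neg_norm_sub_ge_le
    (volume : Measure (EuclideanSpace ℝ (Fin d))) (p := d + δ) (by simpa using hδ)
  simp only [finrank_euclideanSpace_fin, add_sub_cancel_left] at htail
  set N : ℕ := ⌈lam + 1⌉₊
  have hN : lam + 1 ≤ N := Nat.le_ceil _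
  have hN0 : (0 : ℝ) < N := by linarith
  refine ⟨N * C₀ * CV * K, by positivity, ?_⟩
  intro V ν hV0 hVpos hVmono hVsub hVscale _ hν0 hν r hr x _ hxlam
  have hVr := hVpos r hr
  have hmeas : MeasurableSet {y : EuclideanSpace ℝ (Fin d) | r ≤ ‖x - y‖} :=
    measurableSet_le measurable_const (by fun_prop)
  calc _ ≤ ∫⁻ y in {y | r ≤ ‖x - y‖}, ENNReal.ofReal (N * C₀ * CV / V r) *
          ENNReal.ofReal (r ^ δ * ‖x - y‖ ^ (-(d + δ))) := by
        refine setLIntegral_mono' hmeas fun y (hy : r ≤ ‖x - y‖) => ?_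
        have hs := hr.trans_le hy
        rw [← ENNReal.ofReal_mul (by positivity)]
        refine ENNReal.ofReal_le_ofReal (mul_le_of_subadditive_of_lowerScaling (hV0 0 le_rfl)
          hVpos (fun s t => hVmono s t) hVsub (by linarith) hC₀.le hr hy (hVscale r _ hr hy) ?_
          (hν0 _ hs) (hν _ hs))
        exact (max_apply_zero_le_mul_norm_sub hlam.le hxlam hy).trans
          (mul_le_mul_of_nonneg_right hN (norm_nonneg _))
    _ ≤ ENNReal.ofReal (N * C₀ * CV / V r) * ENNReal.ofReal K := by
        rw [lintegral_const_mul' _ _ ENNReal.ofReal_ne_top]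
        gcongr
        exact htail r hr x
    _ = ENNReal.ofReal (N * C₀ * CV * K / V r) := by
        rw [← ENNReal.ofReal_mul (by positivity)]
        ring_nf
end

section
/- Let V : [0,∞) → [0,∞) be nondecreasing, subadditive, with V(0) = 0 and V(s) > 0 for s > 0, and satisfy the lower scaling condition: there are δ > 0 and C_V ≥ 1 such that V(R)/V(r) ≥ C_V^{-1}(R/r)^{δ} for all 0 < r ≤ R. Define g(s) := sup_{t ≥ s} V(t)/t for s > 0. Then g(s) ≤ 2 V(s)/s for every s > 0, and there is a constant c > 0 depending only on δ and C_V such that for every u > 0, G(u) := ∫₀^u g(s) ds ≤ c · V(u). -/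
open MeasureTheory Set

private lemma V_nsmul (V : ℝ → ℝ) (h0 : V 0 = 0)
    (hsub : ∀ s t : ℝ, 0 ≤ s → 0 ≤ t → V (s + t) ≤ V s + V t) :
    ∀ (n : ℕ) (s : ℝ), 0 ≤ s → V (n * s) ≤ n * V s := by
  intro n
  induction n with
  | zero => intro s hs; simp [h0]
  | succ n ih =>
    intro s hs
    have key : V ((n : ℝ) * s + s) ≤ V ((n : ℝ) * s) + V s :=
      hsub _ _ (by positivity) hs
    have h2 := ih s hs
    push_cast
    have h3 : ((n : ℝ) + 1) * s = (n : ℝ) * s + s := by ring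
    rw [h3]
    calc V ((n : ℝ) * s + s) ≤ V ((n : ℝ) * s) + V s := key
      _ ≤ (n : ℝ) * V s + V s := by linarith
      _ = ((n : ℝ) + 1) * V s := by ring

private lemma V_doubling (V : ℝ → ℝ) (h0 : V 0 = 0)
    (hmono : ∀ s t : ℝ, 0 ≤ s → s ≤ t → V s ≤ V t)
    (hsub : ∀ s t : ℝ, 0 ≤ s → 0 ≤ t → V (s + t) ≤ V s + V t)
    {s t : ℝ} (hs : 0 < s) (hst : s ≤ t) :
    V t ≤ 2 * (t / s) * V s := by
  set n := ⌈t / s⌉₊ with hn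
  have h1 : (1 : ℝ) ≤ t / s := (one_le_div hs).mpr hst
  have hts : t / s * s = t := div_mul_cancel₀ t hs.ne'
  have hle : t ≤ (n : ℝ) * s := by
    have := Nat.le_ceil (t / s)
    nlinarith [mul_le_mul_of_nonneg_right this hs.le]
  have hceil : (n : ℝ) ≤ t / s + 1 := (Nat.ceil_lt_add_one (by linarith)).le
  have hVs : 0 ≤ V s := h0 ▸ hmono 0 s le_rfl hs.le
  calc V t ≤ V ((n : ℝ) * s) := hmono _ _ (by linarith) hle
    _ ≤ (n : ℝ) * V s := V_nsmul V h0 hsub n s hs.le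
    _ ≤ (t / s + 1) * V s := mul_le_mul_of_nonneg_right hceil hVs
    _ ≤ 2 * (t / s) * V s := by nlinarith

private lemma g_le_aux (V : ℝ → ℝ) (h0 : V 0 = 0)
    (hmono : ∀ s t : ℝ, 0 ≤ s → s ≤ t → V s ≤ V t)
    (hsub : ∀ s t : ℝ, 0 ≤ s → 0 ≤ t → V (s + t) ≤ V s + V t)
    {s : ℝ} (hs : 0 < s) :
    (⨆ t : {t : ℝ // s ≤ t}, V t / t) ≤ 2 * V s / s := by
  haveI : Nonempty {t : ℝ // s ≤ t} := ⟨⟨s, le_rfl⟩⟩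
  apply ciSup_le
  rintro ⟨t, ht⟩
  have ht0 : 0 < t := lt_of_lt_of_le hs ht
  show V t / t ≤ 2 * V s / s
  have key := V_doubling V h0 hmono hsub hs ht
  rw [div_le_div_iff₀ ht0 hs]
  have hts : t / s * s = t := div_mul_cancel₀ t hs.ne'
  have key' := mul_le_mul_of_nonneg_right key hs.le
  rw [show 2 * (t / s) * V s * s = 2 * (t / s * s) * V s by ring, hts] at key'
  linarith
/-- For `V` nondecreasing, subadditive, `V(0) = 0`, positive on `(0,∞)`
and satisfying a lower scaling condition, the function `g(s) = sup_{t ≥ s} V(t)/t`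
satisfies `g(s) ≤ 2 V(s)/s` for all `s > 0`, and there is `c > 0` depending only on
`δ, C_V` such that `G(u) = ∫₀^u g(s) ds ≤ c V(u)` for all `u > 0`. -/
theorem stmt_10 (δ CV : ℝ) (hδ : 0 < δ) (hCV : 1 ≤ CV) :
    (∀ V : ℝ → ℝ,
      V 0 = 0 →
      (∀ s : ℝ, 0 < s → 0 < V s) →
      (∀ s t : ℝ, 0 ≤ s → s ≤ t → V s ≤ V t) →
      (∀ s t : ℝ, 0 ≤ s → 0 ≤ t → V (s + t) ≤ V s + V t) →
      (∀ r R : ℝ, 0 < r → r ≤ R → CV⁻¹ * (R / r) ^ δ ≤ V R / V r) →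
      ∀ s : ℝ, 0 < s →
        (⨆ t : {t : ℝ // s ≤ t}, V t / t) ≤ 2 * V s / s)
    ∧
    (∃ c : ℝ, 0 < c ∧
      ∀ V : ℝ → ℝ,
        V 0 = 0 →
        (∀ s : ℝ, 0 < s → 0 < V s) →
        (∀ s t : ℝ, 0 ≤ s → s ≤ t → V s ≤ V t) →
        (∀ s t : ℝ, 0 ≤ s → 0 ≤ t → V (s + t) ≤ V s + V t) →
        (∀ r R : ℝ, 0 < r → r ≤ R → CV⁻¹ * (R / r) ^ δ ≤ V R / V r) →
        ∀ u : ℝ, 0 < u →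
          ∫⁻ s in Set.Ioc (0 : ℝ) u,
              ENNReal.ofReal (⨆ t : {t : ℝ // s ≤ t}, V t / t)
            ≤ ENNReal.ofReal (c * V u)) := by
  have hCV0 : (0 : ℝ) < CV := lt_of_lt_of_le one_pos hCV
  constructor
  · intro V h0 hpos hmono hsub hscale s hs
    exact g_le_aux V h0 hmono hsub hs
  · refine ⟨2 * CV / δ, by positivity, ?_⟩
    intro V h0 hpos hmono hsub hscale u hu
    have hVu : 0 < V u := hpos u hu
    set A := 2 * CV * V u / u ^ δ with hA
    have huδ : (0 : ℝ) < u ^ δ := Real.rpow_pos_of_pos hu δ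
    have hA0 : 0 ≤ A := by positivity
    have hbound : ∀ s ∈ Ioc (0 : ℝ) u,
        (⨆ t : {t : ℝ // s ≤ t}, V t / t) ≤ A * s ^ (δ - 1) := by
      rintro s ⟨hs0, hsu⟩
      have hVs : 0 < V s := hpos s hs0
      have h1 := g_le_aux V h0 hmono hsub hs0
      have h2 := hscale s u hs0 hsu
      have hsδ : (0 : ℝ) < s ^ δ := Real.rpow_pos_of_pos hs0 δ
      have husδ : (u / s) ^ δ = u ^ δ / s ^ δ := Real.div_rpow hu.le hs0.le δ
      -- V s ≤ CV * V u * s^δ / u^δ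
      have h3 : V s ≤ CV * V u * s ^ δ / u ^ δ := by
        rw [husδ] at h2
        rw [le_div_iff₀ hVs] at h2
        rw [le_div_iff₀ huδ]
        have hCVinv : CV⁻¹ * CV = 1 := inv_mul_cancel₀ hCV0.ne'
        have h2' := mul_le_mul_of_nonneg_right h2 (mul_nonneg hCV0.le hsδ.le)
        rw [show CV⁻¹ * (u ^ δ / s ^ δ) * V s * (CV * s ^ δ)
            = (CV⁻¹ * CV) * (u ^ δ / s ^ δ * s ^ δ) * V s by ring, hCVinv,
          div_mul_cancel₀ _ hsδ.ne', one_mul] at h2'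
        linarith
      have hsδ1 : s ^ (δ - 1) = s ^ δ / s := by
        rw [Real.rpow_sub hs0, Real.rpow_one]
      refine h1.trans ?_
      rw [hsδ1, hA]
      rw [div_le_iff₀ hs0] at *
      have : 2 * CV * V u / u ^ δ * (s ^ δ / s) * s = 2 * (CV * V u * s ^ δ / u ^ δ) := by
        field_simp
      rw [this]
      linarith
    have hint : IntegrableOn (fun s : ℝ => A * s ^ (δ - 1)) (Ioc 0 u) := by
      have h := (intervalIntegral.intervalIntegrable_rpow'
        (show (-1 : ℝ) < δ - 1 by linarith)).const_mul A (a := 0) (b := u)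
      rwa [intervalIntegrable_iff_integrableOn_Ioc_of_le hu.le] at h
    calc ∫⁻ s in Ioc (0 : ℝ) u, ENNReal.ofReal (⨆ t : {t : ℝ // s ≤ t}, V t / t)
        ≤ ∫⁻ s in Ioc (0 : ℝ) u, ENNReal.ofReal (A * s ^ (δ - 1)) := by
          apply lintegral_mono_ae
          filter_upwards [ae_restrict_mem measurableSet_Ioc] with s hs
          exact ENNReal.ofReal_le_ofReal (hbound s hs)
      _ = ENNReal.ofReal (∫ s in Ioc (0 : ℝ) u, A * s ^ (δ - 1)) := by
          rw [MeasureTheory.ofReal_integral_eq_lintegral_ofReal hint]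
          refine (ae_restrict_iff' measurableSet_Ioc).mpr (ae_of_all _ ?_)
          rintro s ⟨hs0, _⟩
          positivity
      _ ≤ ENNReal.ofReal (2 * CV / δ * V u) := by
          apply ENNReal.ofReal_le_ofReal
          rw [← intervalIntegral.integral_of_le hu.le,
            intervalIntegral.integral_const_mul,
            integral_rpow (Or.inl (by linarith : (-1 : ℝ) < δ - 1))]
          rw [show δ - 1 + 1 = δ by ring, Real.zero_rpow hδ.ne', sub_zero, hA]
          refine le_of_eq ?_
          field_simp
end

section
/- Let φ be a continuous, strictly increasing bijection of (0,∞) onto (0,∞) satisfying (WS), with inverse φ^{-1}, and set C_I := (C̄ c̲^{-1} ∨ c̲^{-2})^{1/α̲}. Then for every T > 0 there is a constant c > 0, depending only on c̲, C̄, α̲, ᾱ and T, such that for all r > 0 and all a with 0 < φ(r) ≤ a ≤ (2^{-1} ∧ (2C_I)^{-ᾱ}) T, one has ∫_{φ(r)/T}^{φ(r)/a} ( a / ( u · φ^{-1}( φ(r)/u ) ) ) du ≤ c · a / φ^{-1}(a). -/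
open MeasureTheory Set

/-- For `φ` a continuous strictly increasing bijection of `(0,∞)` onto
itself satisfying (WS), with inverse `ψ` and `C_I = (C̄ c̲⁻¹ ∨ c̲⁻²)^{1/α̲}`: for every
`T > 0` there is `c > 0` depending only on `c̲, C̄, α̲, ᾱ, T` such that for all `r > 0`
and `φ(r) ≤ a ≤ (2⁻¹ ∧ (2C_I)^{-ᾱ}) T`,
`∫_{φ(r)/T}^{φ(r)/a} a/(u φ⁻¹(φ(r)/u)) du ≤ c a/φ⁻¹(a)`. -/
theorem stmt_12 (cl Cu lα uα : ℝ)
    (hlα : 0 < lα) (hαα : lα ≤ uα) (huα : uα < 2)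
    (hcl : 0 < cl) (hcl1 : cl ≤ 1) (hCu : 1 ≤ Cu)
    (T : ℝ) (hT : 0 < T) :
    ∃ c : ℝ, 0 < c ∧
      ∀ φ ψ : ℝ → ℝ,
        ContinuousOn φ (Set.Ioi 0) →
        StrictMonoOn φ (Set.Ioi 0) →
        Set.BijOn φ (Set.Ioi 0) (Set.Ioi 0) →
        (∀ t ∈ Set.Ioi (0 : ℝ), ψ (φ t) = t) →
        (∀ s ∈ Set.Ioi (0 : ℝ), ψ s ∈ Set.Ioi (0 : ℝ) ∧ φ (ψ s) = s) →
        (∀ r R : ℝ, 0 < r → r ≤ R →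
          cl * (R / r) ^ lα ≤ φ R / φ r ∧ φ R / φ r ≤ Cu * (R / r) ^ uα) →
        ∀ r a : ℝ, 0 < r → φ r ≤ a →
          a ≤ min 2⁻¹ ((2 * max (Cu * cl⁻¹) (cl⁻¹ ^ 2) ^ (1 / lα)) ^ (-uα)) * T →
          ∫⁻ u in Set.Ioc (φ r / T) (φ r / a),
              ENNReal.ofReal (a / (u * ψ (φ r / u)))
            ≤ ENNReal.ofReal (c * a / ψ a) := by
  have huα0 : 0 < uα := hlα.trans_le hαα
  set β : ℝ := 1 / uα with hβ_def
  have hβ0 : 0 < β := by positivity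
  have hCu0 : 0 < Cu := lt_of_lt_of_le one_pos hCu
  refine ⟨Cu ^ β * uα, by positivity, ?_⟩
  intro φ ψ hφc hφm hφbij hψφ hφψ hWS r a hr hra haT
  set s := φ r with hs_def
  have hs : 0 < s := hφbij.mapsTo hr
  have ha : 0 < a := hs.trans_le hra
  have hψa0 : 0 < ψ a := (hφψ a ha).1
  have hφψa : φ (ψ a) = a := (hφψ a ha).2
  have haT' : a ≤ T := by
    have h1 : min 2⁻¹ ((2 * max (Cu * cl⁻¹) (cl⁻¹ ^ 2) ^ (1 / lα)) ^ (-uα)) ≤ 2⁻¹ :=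
      min_le_left _ _
    nlinarith
  have hlohi : s / T ≤ s / a := by gcongr
  have hlo0 : 0 < s / T := div_pos hs hT
  set K : ℝ := a / ψ a * (Cu * a / s) ^ β with hK_def
  have hK0 : 0 < K := by positivity
  have key : ∀ u ∈ Ioc (s / T) (s / a), a / (u * ψ (s / u)) ≤ K * u ^ (β - 1) := by
    rintro u ⟨hu1, hu2⟩
    have hu0 : 0 < u := hlo0.trans hu1
    have hva : a ≤ s / u := by
      rw [le_div_iff₀ hu0]
      have h := (le_div_iff₀ ha).mp hu2
      linarith [mul_comm u a]
    have hv0 : 0 < s / u := lt_of_lt_of_le ha hva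
    have hψv0 : 0 < ψ (s / u) := (hφψ _ hv0).1
    have hφψv : φ (ψ (s / u)) = s / u := (hφψ _ hv0).2
    have hmono : ψ a ≤ ψ (s / u) := by
      by_contra hlt
      push_neg at hlt
      have h := hφm hψv0 hψa0 hlt
      rw [hφψv, hφψa] at h
      linarith
    have hWS' := (hWS (ψ a) (ψ (s / u)) hψa0 hmono).2
    rw [hφψv, hφψa] at hWS'
    have h2 : s / u / (Cu * a) ≤ (ψ (s / u) / ψ a) ^ uα := by
      rw [div_le_iff₀ (by positivity)] at hWS' ⊢
      calc s / u ≤ Cu * (ψ (s / u) / ψ a) ^ uα * a := hWS'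
        _ = (ψ (s / u) / ψ a) ^ uα * (Cu * a) := by ring
    have h3 : (s / u / (Cu * a)) ^ β ≤ ψ (s / u) / ψ a := by
      calc (s / u / (Cu * a)) ^ β ≤ ((ψ (s / u) / ψ a) ^ uα) ^ β :=
            Real.rpow_le_rpow (by positivity) h2 hβ0.le
        _ = ψ (s / u) / ψ a := by
            rw [← Real.rpow_mul (by positivity), mul_one_div, div_self huα0.ne',
              Real.rpow_one]
    have h4 : ψ a * (s / u / (Cu * a)) ^ β ≤ ψ (s / u) := by
      have h := mul_le_mul_of_nonneg_left h3 hψa0.le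
      rwa [mul_div_cancel₀ _ hψa0.ne'] at h
    calc a / (u * ψ (s / u)) ≤ a / (u * (ψ a * (s / u / (Cu * a)) ^ β)) := by
          gcongr
      _ = K * u ^ (β - 1) := by
          rw [Real.rpow_sub hu0, Real.rpow_one,
            show s / u / (Cu * a) = s / (Cu * a) / u by ring,
            Real.div_rpow (by positivity) hu0.le,
            Real.div_rpow hs.le (by positivity), hK_def,
            Real.div_rpow (by positivity) hs.le]
          have h1 : (s : ℝ) ^ β ≠ 0 := by positivity
          have h2' : ((Cu * a) : ℝ) ^ β ≠ 0 := by positivity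
          have h3' : (u : ℝ) ^ β ≠ 0 := by positivity
          field_simp
  have hmeas : Measurable fun u : ℝ => ENNReal.ofReal (K * u ^ (β - 1)) := by
    fun_prop
  refine le_trans (setLIntegral_mono hmeas fun u hu => ENNReal.ofReal_le_ofReal (key u hu)) ?_
  have hint : IntegrableOn (fun u : ℝ => K * u ^ (β - 1)) (Ioc (s / T) (s / a)) := by
    have h := (intervalIntegral.intervalIntegrable_rpow'
      (show (-1 : ℝ) < β - 1 by linarith) (a := s / T) (b := s / a)).const_mul K
    exact (intervalIntegrable_iff_integrableOn_Ioc_of_le hlohi).mp h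
  rw [← ofReal_integral_eq_lintegral_ofReal hint
    ((ae_restrict_iff' measurableSet_Ioc).2 (ae_of_all _ fun u hu => by
      have hu0 : 0 < u := hlo0.trans hu.1
      positivity))]
  apply ENNReal.ofReal_le_ofReal
  have hb1 : β - 1 + 1 = β := by ring
  have hval : ∫ u in Ioc (s / T) (s / a), K * u ^ (β - 1) =
      K * (((s / a) ^ β - (s / T) ^ β) / β) := by
    rw [← intervalIntegral.integral_of_le hlohi, intervalIntegral.integral_const_mul,
      integral_rpow (Or.inl (by linarith)), hb1]
  rw [hval]
  have hKs : K * (s / a) ^ β = a / ψ a * Cu ^ β := by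
    rw [hK_def, mul_assoc, ← Real.mul_rpow (by positivity) (by positivity)]
    congr 2
    field_simp
  have h5 : K * (((s / a) ^ β - (s / T) ^ β) / β) ≤ K * ((s / a) ^ β / β) := by
    gcongr
    · exact sub_le_self _ (by positivity)
  calc K * (((s / a) ^ β - (s / T) ^ β) / β) ≤ K * ((s / a) ^ β / β) := h5
    _ = Cu ^ β * uα * a / ψ a := by
        rw [show K * ((s / a) ^ β / β) = K * (s / a) ^ β * (1 / β) by ring, hKs, hβ_def]
        field_simp
end

section
/- Let d ≥ 2, Λ ≥ 1, and let φ : ℝ^{d-1} → ℝ be Lipschitz with constant Λ and φ(0) = 0. Let D := { y = (ỹ, y_d) ∈ ℝ^d : y_d > φ(ỹ) } and let A := { y = (ỹ, y_d) ∈ ℝ^d : y_d > 2Λ|ỹ| }. Then A ⊆ D, and for every y ∈ A: dist(y, D^c) ≥ |y| / ( 4Λ ((2Λ)^{-2} + 1)^{1/2} ). -/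
open Metric Set

/-!
A point `(z, s)` on or below the graph of `φ` is far from a point `y = (x, t)` of the cone
`2Λ‖x‖ < t`: either `‖x - z‖ ≥ t / (4Λ)`, or `z` is so close to `x` that the Lipschitz bound gives
`s ≤ φ z < 3t/4`, hence `t - s > t/4 ≥ t/(4Λ)`. Both quantities are bounded by `dist y (z, s)`, and in
the cone `‖y‖ ≤ t √((2Λ)⁻² + 1)`.
-/

section LipschitzGraph

variable {E : Type*} [SeminormedAddCommGroup E] {φ : E → ℝ} {Λ : ℝ}

lemma abs_le_mul_norm_of_lipschitz_of_map_zero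
    (hLip : ∀ u v, |φ u - φ v| ≤ Λ * ‖u - v‖) (hφ0 : φ 0 = 0) (u : E) :
    |φ u| ≤ Λ * ‖u‖ := by
  simpa [hφ0] using hLip u 0

lemma lt_of_two_mul_norm_lt (hLip : ∀ u v, |φ u - φ v| ≤ Λ * ‖u - v‖) (hφ0 : φ 0 = 0)
    {x : E} {t : ℝ} (hx : 2 * Λ * ‖x‖ < t) : φ x < t := by
  have hφx := abs_le_mul_norm_of_lipschitz_of_map_zero hLip hφ0 x
  linarith [le_abs_self (φ x), abs_nonneg (φ x)]

variable {p : ENNReal} [Fact (1 ≤ p)]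

lemma div_four_mul_le_dist_of_le_graph (hΛ : 1 ≤ Λ)
    (hLip : ∀ u v, |φ u - φ v| ≤ Λ * ‖u - v‖) (hφ0 : φ 0 = 0) {y w : WithLp p (E × ℝ)}
    (hy : 2 * Λ * ‖y.fst‖ < y.snd) (hw : w.snd ≤ φ w.fst) :
    y.snd / (4 * Λ) ≤ dist y w := by
  by_contra! h
  have ht : 0 < y.snd := lt_of_le_of_lt (by positivity) hy
  have hfst : Λ * ‖y.fst - w.fst‖ < y.snd / 4 := by
    have := (WithLp.dist_fst_le y w).trans_lt h
    rw [dist_eq_norm, lt_div_iff₀ (by positivity)] at this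
    linarith
  have hsnd : y.snd - w.snd < y.snd / 4 := by
    have := (WithLp.dist_snd_le y w).trans_lt h
    rw [Real.dist_eq] at this
    have hquarter : y.snd / (4 * Λ) ≤ y.snd / 4 :=
      div_le_div_of_nonneg_left ht.le (by norm_num) (by linarith)
    linarith [le_abs_self (y.snd - w.snd)]
  have hφx := abs_le_mul_norm_of_lipschitz_of_map_zero hLip hφ0 y.fst
  have hφz : φ w.fst - φ y.fst ≤ Λ * ‖y.fst - w.fst‖ := by
    rw [norm_sub_rev]
    exact (le_abs_self _).trans (hLip _ _)
  linarith [le_abs_self (φ y.fst)]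

end LipschitzGraph

lemma WithLp.norm_le_snd_mul_sqrt {E : Type*} [SeminormedAddCommGroup E] {a : ℝ} (ha : 0 < a)
    {y : WithLp 2 (E × ℝ)} (hy : a * ‖y.fst‖ ≤ y.snd) :
    ‖y‖ ≤ y.snd * √((a ^ 2)⁻¹ + 1) := by
  have ht : 0 ≤ y.snd := (by positivity : 0 ≤ a * ‖y.fst‖).trans hy
  have hfst : ‖y.fst‖ ^ 2 ≤ y.snd ^ 2 * (a ^ 2)⁻¹ := by
    rw [← div_eq_mul_inv, ← div_pow]
    exact pow_le_pow_left₀ (norm_nonneg _) ((le_div_iff₀' ha).mpr hy) 2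
  refine (pow_le_pow_iff_left₀ (norm_nonneg _) (by positivity) two_ne_zero).mp ?_
  rw [mul_pow, Real.sq_sqrt (by positivity), WithLp.prod_norm_sq_eq_of_L2, Real.norm_eq_abs, sq_abs]
  linarith

theorem stmt_15_general (d : ℕ) (Λ : ℝ) (hΛ : 1 ≤ Λ)
    (φ : EuclideanSpace ℝ (Fin (d - 1)) → ℝ)
    (hLip : ∀ u v : EuclideanSpace ℝ (Fin (d - 1)), |φ u - φ v| ≤ Λ * ‖u - v‖)
    (hφ0 : φ 0 = 0) :
    {y : WithLp 2 (EuclideanSpace ℝ (Fin (d - 1)) × ℝ) |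
        2 * Λ * ‖(WithLp.equiv 2 (EuclideanSpace ℝ (Fin (d - 1)) × ℝ) y).1‖
          < (WithLp.equiv 2 (EuclideanSpace ℝ (Fin (d - 1)) × ℝ) y).2}
      ⊆ {y : WithLp 2 (EuclideanSpace ℝ (Fin (d - 1)) × ℝ) |
          φ ((WithLp.equiv 2 (EuclideanSpace ℝ (Fin (d - 1)) × ℝ) y).1)
            < (WithLp.equiv 2 (EuclideanSpace ℝ (Fin (d - 1)) × ℝ) y).2} ∧
    ∀ y : WithLp 2 (EuclideanSpace ℝ (Fin (d - 1)) × ℝ),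
      2 * Λ * ‖(WithLp.equiv 2 (EuclideanSpace ℝ (Fin (d - 1)) × ℝ) y).1‖
        < (WithLp.equiv 2 (EuclideanSpace ℝ (Fin (d - 1)) × ℝ) y).2 →
      ‖y‖ / (4 * Λ * Real.sqrt (((2 * Λ) ^ 2)⁻¹ + 1))
        ≤ Metric.infDist y
            ({w : WithLp 2 (EuclideanSpace ℝ (Fin (d - 1)) × ℝ) |
              φ ((WithLp.equiv 2 (EuclideanSpace ℝ (Fin (d - 1)) × ℝ) w).1)
                < (WithLp.equiv 2 (EuclideanSpace ℝ (Fin (d - 1)) × ℝ) w).2}ᶜ) := by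
  refine ⟨fun y hy => lt_of_two_mul_norm_lt hLip hφ0 hy, fun y (hy : 2 * Λ * ‖y.fst‖ < y.snd) => ?_⟩
  have hzero : (0 : WithLp 2 _) ∈ {w : WithLp 2 (EuclideanSpace ℝ (Fin (d - 1)) × ℝ) |
      φ w.fst < w.snd}ᶜ := by
    simp [hφ0]
  calc ‖y‖ / (4 * Λ * √(((2 * Λ) ^ 2)⁻¹ + 1))
      ≤ y.snd * √(((2 * Λ) ^ 2)⁻¹ + 1) / (4 * Λ * √(((2 * Λ) ^ 2)⁻¹ + 1)) := by
        gcongr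
        exact WithLp.norm_le_snd_mul_sqrt (by positivity) hy.le
    _ = y.snd / (4 * Λ) := by
        rw [mul_div_mul_right _ _ (by positivity)]
    _ ≤ _ := (le_infDist ⟨0, hzero⟩).2 fun w hw =>
        div_four_mul_le_dist_of_le_graph hΛ hLip hφ0 hy (not_lt.1 hw)

/-- If `φ : ℝ^{d-1} → ℝ` is `Λ`-Lipschitz with `Λ ≥ 1` and `φ(0) = 0`,
`D = {(ỹ, y_d) : y_d > φ(ỹ)}` and `A = {(ỹ, y_d) : y_d > 2Λ|ỹ|}`, then `A ⊆ D` and for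
every `y ∈ A`, `dist(y, D^c) ≥ |y| / (4Λ((2Λ)^{-2} + 1)^{1/2})`.  Here `ℝ^d` is
identified with the `ℓ²`-product `ℝ^{d-1} × ℝ`. -/
theorem stmt_15 (d : ℕ) (hd : 2 ≤ d) (Λ : ℝ) (hΛ : 1 ≤ Λ)
    (φ : EuclideanSpace ℝ (Fin (d - 1)) → ℝ)
    (hLip : ∀ u v : EuclideanSpace ℝ (Fin (d - 1)), |φ u - φ v| ≤ Λ * ‖u - v‖)
    (hφ0 : φ 0 = 0) :
    {y : WithLp 2 (EuclideanSpace ℝ (Fin (d - 1)) × ℝ) |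
        2 * Λ * ‖(WithLp.equiv 2 (EuclideanSpace ℝ (Fin (d - 1)) × ℝ) y).1‖
          < (WithLp.equiv 2 (EuclideanSpace ℝ (Fin (d - 1)) × ℝ) y).2}
      ⊆ {y : WithLp 2 (EuclideanSpace ℝ (Fin (d - 1)) × ℝ) |
          φ ((WithLp.equiv 2 (EuclideanSpace ℝ (Fin (d - 1)) × ℝ) y).1)
            < (WithLp.equiv 2 (EuclideanSpace ℝ (Fin (d - 1)) × ℝ) y).2} ∧
    ∀ y : WithLp 2 (EuclideanSpace ℝ (Fin (d - 1)) × ℝ),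
      2 * Λ * ‖(WithLp.equiv 2 (EuclideanSpace ℝ (Fin (d - 1)) × ℝ) y).1‖
        < (WithLp.equiv 2 (EuclideanSpace ℝ (Fin (d - 1)) × ℝ) y).2 →
      ‖y‖ / (4 * Λ * Real.sqrt (((2 * Λ) ^ 2)⁻¹ + 1))
        ≤ Metric.infDist y
            ({w : WithLp 2 (EuclideanSpace ℝ (Fin (d - 1)) × ℝ) |
              φ ((WithLp.equiv 2 (EuclideanSpace ℝ (Fin (d - 1)) × ℝ) w).1)
                < (WithLp.equiv 2 (EuclideanSpace ℝ (Fin (d - 1)) × ℝ) w).2}ᶜ) :=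
  stmt_15_general d Λ hΛ φ hLip hφ0
end
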